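/- For a > 0 define v_a : ℝ → ℝ by v_a(x) = 2·arctan(x/a). Let n ≥ 1, let K ≥ 3 and L ≥ 1 be natural numbers, and let a_1,…,a_K > 0 and b_1,…,b_L > 0. Then there exists a unique ξ = (ξ_1,…,ξ_n) ∈ ℝ^n satisfying, for every j ∈ {1,…,n}, the system Σ_{k=1}^K v_{a_k}(ξ_j) + Σ_{j′≠j} Σ_{l=1}^L ( v_{b_l}(ξ_{j′} + ξ_j) − v_{b_l}(ξ_{j′} − ξ_j) ) = 2π(n+1−j). Moreover this solution satisfies ξ_j ≥ π(n+1−j)/κ₋ for all 1 ≤ j ≤ n, and ξ_j − ξ_{j′} ≥ π(j′−j)/κ₋ for all 1 ≤ j < j′ ≤ n, where κ₋ = Σ_{k=1}^K a_k^{−1} + 2(n−1) Σ_{l=1}^L b_l^{−1}. -/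

import Mathlib

/-!
The system says that `ξ` is a critical point of
`V(ξ) = ∑ⱼ (∑ₖ W_{a_k}(ξⱼ) - 2π(n+1-j) ξⱼ)`
`       + ½ ∑_{j ≠ j'} ∑ₗ (W_{b_l}(ξ_{j'} + ξⱼ) + W_{b_l}(ξ_{j'} - ξⱼ))`,
where `W_a` is the primitive of `v_a` vanishing at `0`. Each `W_a` is convex with slope tending to
`π`, so `W_a(x) ≥ θ|x| - C` for every `θ < π`. With `K ≥ 3` sites and `L ≥ 1` pair terms this beats
the linear term, so `V` is coercive, attains its minimum, and the minimiser solves the system.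

Uniqueness is monotonicity: `v_a` is strictly increasing, and pairing the `(j, j')` and `(j', j)`
terms shows `∑ⱼ (Fⱼ(ξ) - Fⱼ(η)) (ξⱼ - ηⱼ) > 0` for `ξ ≠ η`, where `F` is the left-hand side.

For the bounds, `v_a` is `2/a`-Lipschitz. Every term of equation `j` is a difference of values of
some `v_c` at two points at distance at most `2 max(ξⱼ, 0)` (resp., for the difference of equations
`j` and `j'`, at most `2 max(ξⱼ - ξ_{j'}, 0)`), and summing the Lipschitz bounds gives
`2π(n+1-j) ≤ 2κ₋ max(ξⱼ, 0)` and `2π(j'-j) ≤ 2κ₋ max(ξⱼ - ξ_{j'}, 0)`.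
-/

open Real Finset

/-- The rational function `v_a(x) = 2 arctan(x/a)`. -/
noncomputable def vRat (a x : ℝ) : ℝ := 2 * Real.arctan (x / a)

/-- The rational type B Bethe critical-point system at `α = 0`, `ε = 0`, `μ = ρ`. -/
def ratBSys (n K L : ℕ) (a : Fin K → ℝ) (b : Fin L → ℝ) (ξ : Fin n → ℝ) : Prop :=
  ∀ j : Fin n,
    (∑ k, vRat (a k) (ξ j)) +
    (∑ j' ∈ Finset.univ.erase j, ∑ l,
      (vRat (b l) (ξ j' + ξ j) - vRat (b l) (ξ j' - ξ j)))
    = 2 * π * ((n : ℝ) - j.val)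

theorem Real.lipschitzWith_arctan : LipschitzWith 1 arctan :=
  lipschitzWith_of_nnnorm_deriv_le differentiable_arctan fun x => by
    rw [deriv_arctan, ← NNReal.coe_le_coe, coe_nnnorm, NNReal.coe_one, Real.norm_eq_abs,
      abs_of_pos (by positivity)]
    exact div_le_one_of_le₀ (by nlinarith) (by positivity)

@[simp] theorem vRat_zero (a : ℝ) : vRat a 0 = 0 := by simp [vRat]

theorem vRat_neg (a x : ℝ) : vRat a (-x) = -vRat a x := by
  simp [vRat, neg_div, arctan_neg]

@[fun_prop] theorem continuous_vRat (a : ℝ) : Continuous (vRat a) := by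
  unfold vRat; fun_prop

theorem vRat_strictMono {a : ℝ} (ha : 0 < a) : StrictMono (vRat a) := fun _ _ h =>
  mul_lt_mul_of_pos_left (arctan_strictMono (div_lt_div_of_pos_right h ha)) two_pos

theorem vRat_lt_pi (a x : ℝ) : vRat a x < π := by
  unfold vRat; linarith [arctan_lt_pi_div_two (x / a)]

theorem tendsto_vRat_atTop {a : ℝ} (ha : 0 < a) :
    Filter.Tendsto (vRat a) Filter.atTop (nhds π) := by
  have := (tendsto_nhds_of_tendsto_nhdsWithin tendsto_arctan_atTop).comp
    (Filter.tendsto_id.atTop_div_const ha)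
  show Filter.Tendsto (fun x => 2 * arctan (x / a)) _ _
  simpa [mul_div_cancel₀] using this.const_mul 2

theorem vRat_sub_le {a d x y : ℝ} (ha : 0 < a) (hd : 0 ≤ d) (hxy : x - y ≤ d) :
    vRat a x - vRat a y ≤ 2 / a * d := by
  rcases le_or_gt y x with hyx | hxy'
  · have h := (le_abs_self _).trans (Real.lipschitzWith_arctan.dist_le_mul (x / a) (y / a))
    rw [NNReal.coe_one, one_mul, Real.dist_eq, ← sub_div, abs_div, abs_of_pos ha,
      abs_of_nonneg (sub_nonneg.2 hyx)] at h
    have : (x - y) / a ≤ d / a := div_le_div_of_nonneg_right hxy ha.le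
    rw [vRat, vRat, div_mul_eq_mul_div, mul_div_assoc]
    linarith
  · have := vRat_strictMono ha hxy'
    have : 0 ≤ 2 / a * d := by positivity
    linarith

theorem vRat_sub_mul_sub_pos {a x y : ℝ} (ha : 0 < a) (h : x ≠ y) :
    0 < (vRat a x - vRat a y) * (x - y) := by
  rcases h.lt_or_gt with h | h
  · exact mul_pos_of_neg_of_neg (sub_neg.2 (vRat_strictMono ha h)) (sub_neg.2 h)
  · exact mul_pos (sub_pos.2 (vRat_strictMono ha h)) (sub_pos.2 h)

theorem vRat_sub_mul_sub_nonneg {a : ℝ} (ha : 0 < a) (x y : ℝ) :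
    0 ≤ (vRat a x - vRat a y) * (x - y) := by
  rcases eq_or_ne x y with rfl | h
  · simp
  · exact (vRat_sub_mul_sub_pos ha h).le

noncomputable def vRatPrimitive (a x : ℝ) : ℝ := ∫ t in (0 : ℝ)..x, vRat a t

theorem hasDerivAt_vRatPrimitive (a x : ℝ) : HasDerivAt (vRatPrimitive a) (vRat a x) x :=
  ((continuous_vRat a).integral_hasStrictDerivAt 0 x).hasDerivAt

@[fun_prop] theorem continuous_vRatPrimitive (a : ℝ) : Continuous (vRatPrimitive a) :=
  continuous_iff_continuousAt.2 fun x => (hasDerivAt_vRatPrimitive a x).continuousAt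

theorem vRat_mul_sub_le_vRatPrimitive_sub {a : ℝ} (ha : 0 < a) (x y : ℝ) :
    vRat a y * (x - y) ≤ vRatPrimitive a x - vRatPrimitive a y := by
  have hint : ∀ u v : ℝ, IntervalIntegrable (vRat a) MeasureTheory.volume u v :=
    fun u v => (continuous_vRat a).intervalIntegrable u v
  have hmono := (vRat_strictMono ha).monotone
  rw [vRatPrimitive, vRatPrimitive,
    intervalIntegral.integral_interval_sub_left (hint _ _) (hint _ _)]
  rcases le_total y x with hyx | hxy
  · calc vRat a y * (x - y) = ∫ _ in y..x, vRat a y := by simp [mul_comm]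
      _ ≤ ∫ t in y..x, vRat a t :=
        intervalIntegral.integral_mono_on hyx (by simp) (hint _ _) fun t ht => hmono ht.1
  · rw [intervalIntegral.integral_symm, le_neg, ← mul_neg, neg_sub]
    calc ∫ t in x..y, vRat a t ≤ ∫ _ in x..y, vRat a y :=
          intervalIntegral.integral_mono_on hxy (hint _ _) (by simp) fun t ht => hmono ht.2
      _ = vRat a y * (y - x) := by simp [mul_comm]

/-- Tangent lines of the convex function `vRatPrimitive a` at `0`, `R` and `-R`. -/
theorem vRatPrimitive_ge {a R θ : ℝ} (ha : 0 < a) (hR : 0 ≤ R) (hθ : θ ≤ vRat a R) (x : ℝ) :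
    θ * |x| - π * R ≤ vRatPrimitive a x := by
  have hW0 : vRatPrimitive a 0 = 0 := intervalIntegral.integral_same
  have hpos := vRat_mul_sub_le_vRatPrimitive_sub ha R 0
  have hneg := vRat_mul_sub_le_vRatPrimitive_sub ha (-R) 0
  have hright := vRat_mul_sub_le_vRatPrimitive_sub ha x R
  have hleft := vRat_mul_sub_le_vRatPrimitive_sub ha x (-R)
  simp only [vRat_zero, zero_mul, vRat_neg, hW0] at hpos hneg hleft
  have hπ := vRat_lt_pi a R
  rcases abs_cases x with ⟨hx, hx0⟩ | ⟨hx, hx0⟩ <;> rw [hx] <;> nlinarith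

namespace Finset

variable {ι M : Type*} [Fintype ι] [DecidableEq ι] [AddCommMonoid M]

theorem sum_apply_update {X : Type*} (f : ι → X → M) (ξ : ι → X) (j : ι) (t : X) :
    ∑ p, f p (Function.update ξ j t p) = f j t + ∑ p ∈ univ.erase j, f p (ξ p) := by
  rw [← add_sum_erase _ _ (mem_univ j), Function.update_self]
  congr 1
  exact sum_congr rfl fun p hp => by rw [Function.update_of_ne (ne_of_mem_erase hp)]

theorem sum_sum_erase_eq_sum_erase_add (H : ι → ι → M) (j : ι) :
    ∑ p, ∑ q ∈ univ.erase p, H p q =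
      ∑ q ∈ univ.erase j, (H j q + H q j) +
        ∑ p ∈ univ.erase j, ∑ q ∈ (univ.erase p).erase j, H p q := by
  rw [← add_sum_erase _ _ (mem_univ j), sum_add_distrib, add_assoc,
    ← sum_add_distrib (f := fun p => H p j)]
  congr 1
  exact sum_congr rfl fun p hp =>
    (add_sum_erase _ (H p) (mem_erase.2 ⟨(ne_of_mem_erase hp).symm, mem_univ j⟩)).symm

theorem exists_sum_sum_erase_update_eq {X : Type*} (P : X → X → M) (ξ : ι → X) (j : ι) :
    ∃ C : M, ∀ t,
      ∑ p, ∑ q ∈ univ.erase p, P (Function.update ξ j t p) (Function.update ξ j t q) =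
        ∑ q ∈ univ.erase j, (P t (ξ q) + P (ξ q) t) + C := by
  refine ⟨∑ p ∈ univ.erase j, ∑ q ∈ (univ.erase p).erase j, P (ξ p) (ξ q), fun t => ?_⟩
  rw [sum_sum_erase_eq_sum_erase_add _ j, Function.update_self]
  congr 1
  · refine sum_congr rfl fun q hq => ?_
    rw [Function.update_of_ne (ne_of_mem_erase hq)]
  · refine sum_congr rfl fun p hp => sum_congr rfl fun q hq => ?_
    rw [Function.update_of_ne (ne_of_mem_erase hp), Function.update_of_ne (ne_of_mem_erase hq)]

theorem sum_sum_erase_comm (F : ι → ι → M) :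
    ∑ p, ∑ q ∈ univ.erase p, F p q = ∑ p, ∑ q ∈ univ.erase p, F q p :=
  sum_comm' fun p q => by simp [ne_comm]

theorem sum_sum_erase_eq_sum_Ioi [LinearOrder ι] [LocallyFiniteOrderTop ι]
    [LocallyFiniteOrderBot ι] (F : ι → ι → M) :
    ∑ p, ∑ q ∈ univ.erase p, F p q = ∑ p, ∑ q ∈ Ioi p, (F p q + F q p) := by
  have herase : ∀ p : ι, univ.erase p = Iio p ∪ Ioi p := fun p => by
    ext q; simp [lt_or_lt_iff_ne]
  have hdisj : ∀ p : ι, Disjoint (Iio p) (Ioi p) := fun p =>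
    disjoint_left.2 fun q hq hq' => lt_asymm (mem_Iio.1 hq) (mem_Ioi.1 hq')
  simp only [herase, sum_union (hdisj _), sum_add_distrib]
  rw [add_comm]
  congr 1
  exact sum_comm' fun p q => by simp

end Finset

section PairTerms

variable {β : Type*} [Fintype β]

/-- The interaction energy of `x` with a particle at `y` and with its mirror image at `-y`. -/
noncomputable def pairPotential (b : β → ℝ) (x y : ℝ) : ℝ :=
  ∑ l, (vRatPrimitive (b l) (y + x) + vRatPrimitive (b l) (y - x))

noncomputable def pairForce (b : β → ℝ) (x y : ℝ) : ℝ :=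
  ∑ l, (vRat (b l) (y + x) - vRat (b l) (y - x))

theorem hasDerivAt_pairPotential_add_swap (b : β → ℝ) (y t : ℝ) :
    HasDerivAt (fun s => pairPotential b s y + pairPotential b y s) (2 * pairForce b t y) t := by
  have hW := fun l x => hasDerivAt_vRatPrimitive (b l) x
  have hleft := HasDerivAt.fun_sum (u := univ) fun l _ =>
    ((hW l _).comp t ((hasDerivAt_id t).const_add y)).fun_add
      ((hW l _).comp t ((hasDerivAt_id t).const_sub y))
  have hright := HasDerivAt.fun_sum (u := univ) fun l _ =>
    ((hW l _).comp t ((hasDerivAt_id t).add_const y)).fun_add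
      ((hW l _).comp t ((hasDerivAt_id t).sub_const y))
  refine (hleft.fun_add hright).congr_deriv ?_
  simp only [pairForce, id, mul_one, mul_neg, add_comm t y, show t - y = -(y - t) by ring,
    vRat_neg, ← sum_add_distrib, mul_sum]
  exact sum_congr rfl fun l _ => by ring

theorem pairForce_sub_mul_add_nonneg {b : β → ℝ} (hb : ∀ l, 0 < b l) (x y x' y' : ℝ) :
    0 ≤ (pairForce b x y - pairForce b x' y') * (x - x') +
      (pairForce b y x - pairForce b y' x') * (y - y') := by
  simp only [pairForce, ← sum_sub_distrib, sum_mul, ← sum_add_distrib]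
  refine sum_nonneg fun l _ => ?_
  rw [add_comm x y, add_comm x' y', show x - y = -(y - x) by ring,
    show x' - y' = -(y' - x') by ring, vRat_neg, vRat_neg]
  nlinarith [vRat_sub_mul_sub_nonneg (hb l) (y + x) (y' + x'),
    vRat_sub_mul_sub_nonneg (hb l) (y - x) (y' - x')]

theorem pairPotential_add_swap_ge {b : β → ℝ} {θ M : ℝ} (hθ : 0 ≤ θ)
    (hW : ∀ l z, θ * |z| - M ≤ vRatPrimitive (b l) z) (x y : ℝ) :
    4 * Fintype.card β * (θ * |x| - M) ≤ pairPotential b x y + pairPotential b y x := by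
  have h2 : ∀ u v, 2 * |x| ≤ |u| + |v| → ∀ l,
      2 * (θ * |x| - M) ≤ vRatPrimitive (b l) u + vRatPrimitive (b l) v := fun u v huv l => by
    nlinarith [hW l u, hW l v]
  have h1 : 2 * |x| ≤ |y + x| + |y - x| :=
    calc 2 * |x| = |(y + x) - (y - x)| := by rw [← abs_two, ← abs_mul]; ring_nf
      _ ≤ _ := abs_sub _ _
  have h1' : 2 * |x| ≤ |x + y| + |x - y| :=
    calc 2 * |x| = |(x + y) + (x - y)| := by rw [← abs_two, ← abs_mul]; ring_nf
      _ ≤ _ := abs_add_le _ _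
  have := add_le_add (sum_le_sum fun l (_ : l ∈ univ) => h2 _ _ h1 l)
    (sum_le_sum fun l (_ : l ∈ univ) => h2 _ _ h1' l)
  simp only [sum_const, card_univ, nsmul_eq_mul] at this
  rw [pairPotential, pairPotential]
  linarith

end PairTerms

section Potential

variable {ι α β : Type*} [Fintype ι] [DecidableEq ι] [Fintype α] [Fintype β]

noncomputable def ratBLhs (a : α → ℝ) (b : β → ℝ) (ξ : ι → ℝ) (j : ι) : ℝ :=
  (∑ k, vRat (a k) (ξ j)) + ∑ q ∈ univ.erase j, pairForce b (ξ j) (ξ q)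

noncomputable def ratBPotential (a : α → ℝ) (b : β → ℝ) (c ξ : ι → ℝ) : ℝ :=
  ∑ j, (∑ k, vRatPrimitive (a k) (ξ j) - c j * ξ j) +
    (∑ p, ∑ q ∈ univ.erase p, pairPotential b (ξ p) (ξ q)) / 2

theorem continuous_ratBPotential (a : α → ℝ) (b : β → ℝ) (c : ι → ℝ) :
    Continuous (ratBPotential a b c) := by
  unfold ratBPotential pairPotential; fun_prop

theorem hasDerivAt_ratBPotential_update (a : α → ℝ) (b : β → ℝ) (c ξ : ι → ℝ) (j : ι) :
    HasDerivAt (fun t => ratBPotential a b c (Function.update ξ j t)) (ratBLhs a b ξ j - c j)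
      (ξ j) := by
  obtain ⟨C, hC⟩ := exists_sum_sum_erase_update_eq (pairPotential b) ξ j
  have hsite : HasDerivAt (fun t => ∑ k, vRatPrimitive (a k) t - c j * t)
      ((∑ k, vRat (a k) (ξ j)) - c j) (ξ j) := by
    simpa using (HasDerivAt.fun_sum fun k _ => hasDerivAt_vRatPrimitive (a k) (ξ j)).fun_sub
      ((hasDerivAt_id (ξ j)).const_mul (c j))
  have hpair := (HasDerivAt.fun_sum fun q (_ : q ∈ univ.erase j) =>
    hasDerivAt_pairPotential_add_swap b (ξ q) (ξ j)).div_const 2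
  have := (hsite.add_const (∑ p ∈ univ.erase j,
    (∑ k, vRatPrimitive (a k) (ξ p) - c p * ξ p))).fun_add (hpair.add_const (C / 2))
  refine (this.congr_of_eventuallyEq (Filter.Eventually.of_forall fun t => ?_)).congr_deriv ?_
  · rw [ratBPotential, sum_apply_update (fun p x => ∑ k, vRatPrimitive (a k) x - c p * x), hC]
    ring
  · simp only [ratBLhs, ← mul_sum]
    ring

theorem ratBLhs_eq_of_forall_le {a : α → ℝ} {b : β → ℝ} {c ξ : ι → ℝ}
    (h : ∀ η, ratBPotential a b c ξ ≤ ratBPotential a b c η) (j : ι) :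
    ratBLhs a b ξ j = c j := by
  have hmin : IsLocalMin (fun t => ratBPotential a b c (Function.update ξ j t)) (ξ j) :=
    Filter.Eventually.of_forall fun t => by simpa using h _
  exact sub_eq_zero.1 (hmin.hasDerivAt_eq_zero (hasDerivAt_ratBPotential_update a b c ξ j))

theorem sum_pairForce_sub_mul_nonneg {b : β → ℝ} (hb : ∀ l, 0 < b l) (ξ η : ι → ℝ) :
    0 ≤ ∑ j, ∑ q ∈ univ.erase j,
      (pairForce b (ξ j) (ξ q) - pairForce b (η j) (η q)) * (ξ j - η j) := by
  set F : ι → ι → ℝ := fun j q => (pairForce b (ξ j) (ξ q) - pairForce b (η j) (η q)) * (ξ j - η j)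
  have hsym : 2 * ∑ j, ∑ q ∈ univ.erase j, F j q =
      ∑ j, ∑ q ∈ univ.erase j, (F j q + F q j) := by
    rw [two_mul]
    nth_rw 2 [sum_sum_erase_comm]
    simp only [← sum_add_distrib]
  have := sum_nonneg fun j (_ : j ∈ univ) => sum_nonneg fun q (_ : q ∈ univ.erase j) =>
    pairForce_sub_mul_add_nonneg hb (ξ j) (ξ q) (η j) (η q)
  linarith

theorem ratBLhs_injective [Nonempty α] {a : α → ℝ} {b : β → ℝ} (ha : ∀ k, 0 < a k)
    (hb : ∀ l, 0 < b l) : Function.Injective (ratBLhs (ι := ι) a b) := by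
  intro ξ η h
  set S : ι → ℝ := fun j => ∑ k, (vRat (a k) (ξ j) - vRat (a k) (η j)) * (ξ j - η j)
  have hS : ∀ j, 0 ≤ S j := fun j => sum_nonneg fun k _ => vRat_sub_mul_sub_nonneg (ha k) _ _
  have hsplit : ∑ j, (ratBLhs a b ξ j - ratBLhs a b η j) * (ξ j - η j) = ∑ j, S j +
      ∑ j, ∑ q ∈ univ.erase j,
        (pairForce b (ξ j) (ξ q) - pairForce b (η j) (η q)) * (ξ j - η j) := by
    rw [← sum_add_distrib]
    refine sum_congr rfl fun j _ => ?_
    simp only [ratBLhs, S, ← sum_mul, ← add_mul, sum_sub_distrib]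
    ring
  have hzero : ∑ j, S j = 0 := by
    have := sum_pairForce_sub_mul_nonneg hb ξ η
    simp only [h, sub_self, zero_mul, sum_const_zero] at hsplit
    linarith [sum_nonneg fun j (_ : j ∈ univ) => hS j]
  funext j
  by_contra hne
  obtain ⟨k⟩ := ‹Nonempty α›
  have hk : 0 < S j := sum_pos' (fun k _ => vRat_sub_mul_sub_nonneg (ha k) _ _)
    ⟨k, mem_univ k, vRat_sub_mul_sub_pos (ha k) hne⟩
  linarith [single_le_sum (fun j (_ : j ∈ univ) => hS j) (mem_univ j)]

theorem ratBLhs_le {a : α → ℝ} {b : β → ℝ} (ha : ∀ k, 0 < a k) (hb : ∀ l, 0 < b l)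
    (ξ : ι → ℝ) (j : ι) :
    ratBLhs a b ξ j ≤
      2 * (∑ k, (a k)⁻¹ + 2 * ((Fintype.card ι : ℝ) - 1) * ∑ l, (b l)⁻¹) * max (ξ j) 0 := by
  set D := max (ξ j) 0
  have hD : 0 ≤ D := le_max_right _ _
  have hcard : ((univ.erase j).card : ℝ) + 1 = Fintype.card ι := by
    exact_mod_cast card_erase_add_one (mem_univ j)
  calc ratBLhs a b ξ j = ∑ k, (vRat (a k) (ξ j) - vRat (a k) 0) +
        ∑ q ∈ univ.erase j, ∑ l, (vRat (b l) (ξ q + ξ j) - vRat (b l) (ξ q - ξ j)) := by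
        simp [ratBLhs, pairForce]
    _ ≤ ∑ k, 2 / a k * D + ∑ q ∈ univ.erase j, ∑ l, 2 / b l * (2 * D) :=
        add_le_add (sum_le_sum fun k _ => vRat_sub_le (ha k) hD (by simp [D]))
          (sum_le_sum fun q _ => sum_le_sum fun l _ =>
            vRat_sub_le (hb l) (by positivity) (by linarith [le_max_left (ξ j) 0]))
    _ = _ := by
        simp only [sum_const, nsmul_eq_mul, div_eq_mul_inv, ← sum_mul, ← mul_sum]
        rw [← hcard]
        ring

theorem ratBLhs_sub_le {a : α → ℝ} {b : β → ℝ} (ha : ∀ k, 0 < a k) (hb : ∀ l, 0 < b l)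
    (ξ : ι → ℝ) {i j : ι} (hij : i ≠ j) :
    ratBLhs a b ξ i - ratBLhs a b ξ j ≤
      2 * (∑ k, (a k)⁻¹ + 2 * ((Fintype.card ι : ℝ) - 1) * ∑ l, (b l)⁻¹) *
        max (ξ i - ξ j) 0 := by
  set D := max (ξ i - ξ j) 0
  have hD : 0 ≤ D := le_max_right _ _
  have hdD : ξ i - ξ j ≤ D := le_max_left _ _
  set S := (univ.erase i).erase j
  have hji : j ∈ univ.erase i := mem_erase.2 ⟨hij.symm, mem_univ j⟩
  have hij' : i ∈ univ.erase j := mem_erase.2 ⟨hij, mem_univ i⟩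
  have hcard : ((S.card : ℝ) + 1) + 1 = Fintype.card ι := by
    exact_mod_cast by rw [card_erase_add_one hji, card_erase_add_one (mem_univ i), card_univ]
  have hi : ratBLhs a b ξ i = ∑ k, vRat (a k) (ξ i) + pairForce b (ξ i) (ξ j) +
      ∑ q ∈ S, pairForce b (ξ i) (ξ q) := by
    rw [ratBLhs, ← add_sum_erase _ _ hji, add_assoc]
  have hj : ratBLhs a b ξ j = ∑ k, vRat (a k) (ξ j) + pairForce b (ξ j) (ξ i) +
      ∑ q ∈ S, pairForce b (ξ j) (ξ q) := by
    rw [ratBLhs, ← add_sum_erase _ _ hij', erase_right_comm, add_assoc]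
  calc ratBLhs a b ξ i - ratBLhs a b ξ j = ∑ k, (vRat (a k) (ξ i) - vRat (a k) (ξ j)) +
        ∑ l, (vRat (b l) (ξ i - ξ j) - vRat (b l) (ξ j - ξ i)) +
        ∑ q ∈ S, ∑ l, ((vRat (b l) (ξ q + ξ i) - vRat (b l) (ξ q + ξ j)) +
          (vRat (b l) (ξ q - ξ j) - vRat (b l) (ξ q - ξ i))) := by
        rw [hi, hj]
        simp only [pairForce, add_comm (ξ j) (ξ i), sum_sub_distrib, sum_add_distrib]
        ring
    _ ≤ ∑ k, 2 / a k * D + ∑ l, 2 / b l * (2 * D) +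
        ∑ q ∈ S, ∑ l, (2 / b l * D + 2 / b l * D) :=
        add_le_add (add_le_add (sum_le_sum fun k _ => vRat_sub_le (ha k) hD hdD)
          (sum_le_sum fun l _ => vRat_sub_le (hb l) (by positivity) (by linarith)))
          (sum_le_sum fun q _ => sum_le_sum fun l _ => add_le_add
            (vRat_sub_le (hb l) hD (by linarith)) (vRat_sub_le (hb l) hD (by linarith)))
    _ = _ := by
        simp only [sum_const, nsmul_eq_mul, div_eq_mul_inv, ← sum_mul, ← mul_sum, sum_add_distrib]
        rw [← hcard]
        ring

end Potential

section Existence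

variable {α β : Type*} [Fintype α] [Fintype β]

theorem exists_forall_vRatPrimitive_ge {a : α → ℝ} {b : β → ℝ} (ha : ∀ k, 0 < a k)
    (hb : ∀ l, 0 < b l) {θ : ℝ} (hθ : θ < π) :
    ∃ M, ∀ x, (∀ k, θ * |x| - M ≤ vRatPrimitive (a k) x) ∧
      (∀ l, θ * |x| - M ≤ vRatPrimitive (b l) x) := by
  obtain ⟨R, hR, hRa, hRb⟩ := ((Filter.eventually_ge_atTop 0).and
    ((Filter.eventually_all.2 fun k => (tendsto_vRat_atTop (ha k)).eventually_const_lt hθ).and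
      (Filter.eventually_all.2 fun l => (tendsto_vRat_atTop (hb l)).eventually_const_lt hθ))).exists
  exact ⟨π * R, fun x => ⟨fun k => vRatPrimitive_ge (ha k) hR (hRa k).le x,
    fun l => vRatPrimitive_ge (hb l) hR (hRb l).le x⟩⟩

/-- With `θ = π (2n + 1) / (2n + 2)`, the slope `Kθ + 2Lθ(m - 1)` that `K` sites and `m - 1`
pair partners give a coordinate beats the slope `2πm` of the linear term, uniformly in `m ≤ n`. -/
theorem ratB_coercivity_margin {n K L m : ℝ} (hK : 3 ≤ K) (hL : 1 ≤ L) (hm : 1 ≤ m)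
    (hmn : m ≤ n) :
    π / (2 * n + 2) ≤ K * (π * (2 * n + 1) / (2 * n + 2)) +
      2 * L * (π * (2 * n + 1) / (2 * n + 2)) * (m - 1) - 2 * π * m := by
  have hn : 0 < 2 * n + 2 := by linarith
  have hθ : 0 ≤ π * (2 * n + 1) / (2 * n + 2) := div_nonneg (by nlinarith [pi_pos]) hn.le
  have key : π * (2 * n + 1) / (2 * n + 2) * (2 * m + 1) - 2 * π * m - π / (2 * n + 2) =
      π * (2 * (n - m)) / (2 * n + 2) := by
    rw [div_mul_eq_mul_div, div_sub' hn.ne', div_sub_div_same]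
    ring
  have : 0 ≤ π * (2 * (n - m)) / (2 * n + 2) :=
    div_nonneg (mul_nonneg pi_pos.le (by linarith)) hn.le
  nlinarith [mul_le_mul_of_nonneg_right hK hθ,
    mul_le_mul_of_nonneg_right hL (mul_nonneg hθ (by linarith : (0 : ℝ) ≤ m - 1))]

theorem sum_sum_erase_pairPotential_ge {ι : Type*} [Fintype ι] [DecidableEq ι] [LinearOrder ι]
    [LocallyFiniteOrderTop ι] [LocallyFiniteOrderBot ι] {b : β → ℝ} {θ M : ℝ} (hθ : 0 ≤ θ)
    (hW : ∀ l z, θ * |z| - M ≤ vRatPrimitive (b l) z) (ξ : ι → ℝ) :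
    ∑ p, ((Ioi p).card : ℝ) * (4 * Fintype.card β * (θ * |ξ p| - M)) ≤
      ∑ p, ∑ q ∈ univ.erase p, pairPotential b (ξ p) (ξ q) := by
  rw [sum_sum_erase_eq_sum_Ioi]
  refine sum_le_sum fun p _ => ?_
  simpa using sum_le_sum fun q (_ : q ∈ Ioi p) => pairPotential_add_swap_ge hθ hW (ξ p) (ξ q)

theorem exists_ratBPotential_ge {a : α → ℝ} {b : β → ℝ} (ha : ∀ k, 0 < a k) (hb : ∀ l, 0 < b l)
    (hK : 3 ≤ Fintype.card α) (hL : 1 ≤ Fintype.card β) (n : ℕ) :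
    ∃ C, ∀ ξ : Fin n → ℝ, π / (2 * n + 2) * ∑ j, |ξ j| - C ≤
      ratBPotential a b (fun j => 2 * π * ((n : ℝ) - j.val)) ξ := by
  set θ := π * (2 * n + 1) / (2 * n + 2)
  have hθ : 0 ≤ θ := by positivity
  have hθπ : θ < π := by
    rw [div_lt_iff₀ (by positivity)]; nlinarith [pi_pos]
  obtain ⟨M, hM⟩ := exists_forall_vRatPrimitive_ge ha hb hθπ
  set K : ℝ := (Fintype.card α : ℝ)
  set L : ℝ := (Fintype.card β : ℝ)
  set N : Fin n → ℝ := fun p => ((Ioi p).card : ℝ)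
  have hN : ∀ p, N p = n - 1 - p := fun p => by
    have := p.is_lt
    simp only [N]
    rw [Fin.card_Ioi, Nat.cast_sub (by omega), Nat.cast_sub (by omega), Nat.cast_one]
  have hcoef : ∀ p : Fin n, π / (2 * n + 2) ≤ K * θ + 2 * L * θ * N p - 2 * π * (n - p) :=
    fun p => by
      have hp : (p : ℝ) + 1 ≤ n := by exact_mod_cast p.is_lt
      have := ratB_coercivity_margin (n := n) (K := K) (L := L) (m := n - p)
        (by simp only [K]; exact_mod_cast hK) (by simp only [L]; exact_mod_cast hL)
        (by linarith) (by linarith [p.val.cast_nonneg (α := ℝ)])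
      rw [hN p]
      linarith
  refine ⟨∑ p : Fin n, (K + 2 * L * N p) * M, fun ξ => ?_⟩
  have hsite : ∀ p : Fin n, (K * θ - 2 * π * (n - p)) * |ξ p| - K * M ≤
      ∑ k, vRatPrimitive (a k) (ξ p) - 2 * π * (n - p) * ξ p := fun p => by
    have hc : 0 ≤ 2 * π * ((n : ℝ) - p) :=
      mul_nonneg (by positivity) (sub_nonneg.2 (by exact_mod_cast p.is_lt.le))
    have := sum_le_sum fun k (_ : k ∈ univ) => (hM (ξ p)).1 k
    simp only [sum_const, card_univ, nsmul_eq_mul] at this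
    nlinarith [mul_le_mul_of_nonneg_left (le_abs_self (ξ p)) hc]
  have hpair := sum_sum_erase_pairPotential_ge hθ (fun l z => (hM z).2 l) ξ
  calc π / (2 * n + 2) * ∑ j, |ξ j| - ∑ p, (K + 2 * L * N p) * M
      = ∑ p, (π / (2 * n + 2) * |ξ p| - (K + 2 * L * N p) * M) := by
        rw [mul_sum, sum_sub_distrib]
    _ ≤ ∑ p, ((K * θ - 2 * π * (n - p)) * |ξ p| - K * M +
          N p * (4 * L * (θ * |ξ p| - M)) / 2) :=
        sum_le_sum fun p _ => by
          nlinarith [mul_le_mul_of_nonneg_right (hcoef p) (abs_nonneg (ξ p))]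
    _ = ∑ p, ((K * θ - 2 * π * (n - p)) * |ξ p| - K * M) +
          (∑ p, N p * (4 * L * (θ * |ξ p| - M))) / 2 := by
        rw [sum_add_distrib, sum_div]
    _ ≤ _ := add_le_add (sum_le_sum fun p _ => hsite p)
        (div_le_div_of_nonneg_right hpair two_pos.le)

theorem tendsto_ratBPotential_cocompact {a : α → ℝ} {b : β → ℝ} (ha : ∀ k, 0 < a k)
    (hb : ∀ l, 0 < b l) (hK : 3 ≤ Fintype.card α) (hL : 1 ≤ Fintype.card β) (n : ℕ) :
    Filter.Tendsto (ratBPotential a b fun j : Fin n => 2 * π * ((n : ℝ) - j.val))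
      (Filter.cocompact _) Filter.atTop := by
  obtain ⟨C, hC⟩ := exists_ratBPotential_ge ha hb hK hL n
  refine Filter.tendsto_atTop_mono (fun ξ => le_trans ?_ (hC ξ))
    (Filter.tendsto_atTop_add_const_right _ (-C)
      (tendsto_norm_cocompact_atTop.const_mul_atTop (by positivity : 0 < π / (2 * n + 2))))
  have : ‖ξ‖ ≤ ∑ j, |ξ j| := (pi_norm_le_iff_of_nonneg (by positivity)).2 fun i =>
    single_le_sum (f := fun j => |ξ j|) (fun j _ => abs_nonneg _) (mem_univ i)
  have := mul_le_mul_of_nonneg_left this (by positivity : 0 ≤ π / (2 * n + 2))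
  linarith

theorem exists_ratBLhs_eq {a : α → ℝ} {b : β → ℝ} (ha : ∀ k, 0 < a k) (hb : ∀ l, 0 < b l)
    (hK : 3 ≤ Fintype.card α) (hL : 1 ≤ Fintype.card β) (n : ℕ) :
    ∃ ξ : Fin n → ℝ, ∀ j, ratBLhs a b ξ j = 2 * π * ((n : ℝ) - j.val) :=
  let ⟨ξ, hξ⟩ := (continuous_ratBPotential a b _).exists_forall_le
    (tendsto_ratBPotential_cocompact ha hb hK hL n)
  ⟨ξ, ratBLhs_eq_of_forall_le hξ⟩

end Existence

theorem div_le_of_le_mul_max {c κ d : ℝ} (hc : 0 < c) (hκ : 0 ≤ κ) (h : c ≤ κ * max d 0) :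
    c / κ ≤ d := by
  have hpos : 0 < κ * max d 0 := hc.trans_le h
  have hd : 0 < d := by simpa using pos_of_mul_pos_right hpos hκ
  rw [max_eq_left hd.le] at h
  rwa [div_le_iff₀ (pos_of_mul_pos_left hpos (le_max_right _ _)), mul_comm]

theorem ratB_exists_unique_and_bounds
    (n K L : ℕ) (hK : 3 ≤ K) (hL : 1 ≤ L)
    (a : Fin K → ℝ) (b : Fin L → ℝ)
    (ha : ∀ k, 0 < a k) (hb : ∀ l, 0 < b l)
    (κ : ℝ)
    (hκ : κ = (∑ k, (a k)⁻¹) + 2 * ((n : ℝ) - 1) * (∑ l, (b l)⁻¹)) :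
    (∃! ξ : Fin n → ℝ, ratBSys n K L a b ξ) ∧
    (∀ ξ : Fin n → ℝ, ratBSys n K L a b ξ →
      (∀ j : Fin n, π * ((n : ℝ) - j.val) / κ ≤ ξ j) ∧
      (∀ j j' : Fin n, j < j' →
        π * ((j'.val : ℝ) - j.val) / κ ≤ ξ j - ξ j')) := by
  have : Nonempty (Fin K) := ⟨⟨0, by omega⟩⟩
  have hκ0 : ∀ _ : Fin n, 0 ≤ κ := fun j => by
    have hn : (1 : ℝ) ≤ n := by exact_mod_cast j.pos
    have := sum_nonneg fun k (_ : k ∈ univ) => (inv_pos.2 (ha k)).le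
    have := sum_nonneg fun l (_ : l ∈ univ) => (inv_pos.2 (hb l)).le
    rw [hκ]; nlinarith
  obtain ⟨ξ₀, hξ₀⟩ := exists_ratBLhs_eq ha hb (by simpa using hK) (by simpa using hL) n
  refine ⟨⟨ξ₀, hξ₀, fun η hη =>
      ratBLhs_injective ha hb (funext fun j => (hη j).trans (hξ₀ j).symm)⟩,
    fun ξ (hξ : ∀ j, ratBLhs a b ξ j = _) => ⟨fun j => ?_, fun j j' hjj' => ?_⟩⟩
  · have := ratBLhs_le ha hb ξ j
    rw [hξ j, Fintype.card_fin, ← hκ] at this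
    have hj : (j.val : ℝ) < n := by exact_mod_cast j.is_lt
    exact div_le_of_le_mul_max (by nlinarith [pi_pos]) (hκ0 j) (by linarith)
  · have := ratBLhs_sub_le ha hb ξ hjj'.ne
    rw [hξ j, hξ j', Fintype.card_fin, ← hκ] at this
    have hj : (j.val : ℝ) < j'.val := by exact_mod_cast hjj'
    exact div_le_of_le_mul_max (by nlinarith [pi_pos]) (hκ0 j) (by linarith)
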